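/- arXiv:2605.05220 — 6 statements merged into one kernel-verified Lean document; each statement's English description precedes it below -/
import Mathlib

section
/- Let X be a random vector in ℝ^d on a probability space with E[‖X‖²] < ∞, mean E[X] = 0, and covariance matrix Cov(X,X) = I_d. Let C be a {0,1}-valued random variable on the same space with 0 < P(C=1) < 1, and suppose the vector v := E[X | C=1] − E[X | C=0] is nonzero; set s := v/‖v‖. Define f_delete : ℝ^d → ℝ^d by f_delete(h) = h − ⟨h,s⟩·s. Then (i) Cov(f_delete(X), C) = 0 (every component of the cross-covariance vector vanishes), and (ii) for every matrix A ∈ ℝ^{d×d} and vector b ∈ ℝ^d such that Cov(AX + b, C) = 0, one has E[‖f_delete(X) − X‖²] ≤ E[‖AX + b − X‖²]. That is, f_delete is an optimal affine concept-erasure map (vanilla steering in erasure mode is a special case of LEACE). -/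
open MeasureTheory Matrix

/-- For a standardized random vector `X` (`E[X]=0`, `Cov(X,X)=I`) and a
binary concept variable `C` with `0 < P(C=1) < 1` and nonzero steering vector
`v = E[X|C=1] − E[X|C=0]`, `s = v/‖v‖`, the map `f_delete(h) = h − ⟨h,s⟩·s` satisfies
`Cov(f_delete(X), C) = 0` and is optimal among all affine maps with that property:
vanilla steering in erasure mode is a special case of LEACE. -/
theorem vanilla_erasure_is_special_case_of_LEACE
    {Ω : Type*} [MeasureSpace Ω] [IsProbabilityMeasure (volume : Measure Ω)]
    {d : ℕ} (X : Ω → Fin d → ℝ) (C : Ω → ℝ)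
    (hXm : Measurable X) (hCm : Measurable C)
    (hX2 : Integrable (fun ω => ∑ i, (X ω i) ^ 2))
    (hmean : ∀ i, (∫ ω, X ω i) = 0)
    (hcov : ∀ i j, (∫ ω, X ω i * X ω j) - (∫ ω, X ω i) * (∫ ω, X ω j)
              = if i = j then 1 else 0)
    (hC01 : ∀ ω, C ω = 0 ∨ C ω = 1)
    (hP1 : 0 < (volume {ω | C ω = 1}).toReal)
    (hP1' : (volume {ω | C ω = 1}).toReal < 1)
    (v : Fin d → ℝ)
    (hv : v = fun i =>
      (∫ ω in {ω | C ω = 1}, X ω i) / (volume {ω | C ω = 1}).toReal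
        - (∫ ω in {ω | C ω = 0}, X ω i) / (volume {ω | C ω = 0}).toReal)
    (hv0 : v ≠ 0)
    (s : Fin d → ℝ) (hs : s = fun i => v i / Real.sqrt (∑ j, (v j) ^ 2))
    (fdel : (Fin d → ℝ) → Fin d → ℝ)
    (hf : ∀ h, fdel h = fun i => h i - (∑ j, h j * s j) * s i) :
    (∀ i, (∫ ω, fdel (X ω) i * C ω) - (∫ ω, fdel (X ω) i) * (∫ ω, C ω) = 0)
    ∧
    (∀ (A : Matrix (Fin d) (Fin d) ℝ) (b : Fin d → ℝ),
      (∀ i, (∫ ω, (A.mulVec (X ω) i + b i) * C ω)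
          - (∫ ω, A.mulVec (X ω) i + b i) * (∫ ω, C ω) = 0) →
      (∫ ω, ∑ i, (fdel (X ω) i - X ω i) ^ 2)
        ≤ ∫ ω, ∑ i, (A.mulVec (X ω) i + b i - X ω i) ^ 2) := by
  set S1 : Set Ω := {ω | C ω = 1} with hS1
  have hS1m : MeasurableSet S1 := hCm (measurableSet_singleton 1)
  set p : ℝ := (volume S1).toReal with hp
  -- measurability
  have hXim : ∀ i, Measurable (fun ω => X ω i) := fun i => (measurable_pi_apply i).comp hXm
  -- integrability facts
  have hXi2 : ∀ i, Integrable (fun ω => (X ω i) ^ 2) := by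
    intro i
    refine hX2.mono' ((hXim i).pow_const 2).aestronglyMeasurable ?_
    filter_upwards with ω
    rw [Real.norm_eq_abs, abs_of_nonneg (sq_nonneg _)]
    exact Finset.single_le_sum (fun j _ => sq_nonneg (X ω j)) (Finset.mem_univ i)
  have hXi : ∀ i, Integrable (fun ω => X ω i) := by
    intro i
    refine ((hXi2 i).add (integrable_const 1)).mono' (hXim i).aestronglyMeasurable ?_
    filter_upwards with ω
    simp only [Pi.add_apply, Real.norm_eq_abs]
    nlinarith [sq_nonneg (|X ω i| - 1), abs_nonneg (X ω i), sq_abs (X ω i)]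
  have hXij : ∀ i j, Integrable (fun ω => X ω i * X ω j) := by
    intro i j
    refine ((hXi2 i).add (hXi2 j)).mono' ((hXim i).mul (hXim j)).aestronglyMeasurable ?_
    filter_upwards with ω
    simp only [Pi.add_apply, Real.norm_eq_abs, abs_mul]
    nlinarith [sq_nonneg (|X ω i| - |X ω j|), sq_abs (X ω i), sq_abs (X ω j),
      abs_nonneg (X ω i), abs_nonneg (X ω j)]
  have hCb : ∀ ω, |C ω| ≤ 1 := by
    intro ω; rcases hC01 ω with h | h <;> simp [h]
  have hCint : Integrable C := by
    refine (integrable_const (1 : ℝ)).mono' hCm.aestronglyMeasurable ?_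
    filter_upwards with ω; simpa using hCb ω
  have hXiC : ∀ i, Integrable (fun ω => X ω i * C ω) := by
    intro i
    refine (hXi i).abs.mono' ((hXim i).mul hCm).aestronglyMeasurable ?_
    filter_upwards with ω
    rw [Real.norm_eq_abs, abs_mul]
    calc |X ω i| * |C ω| ≤ |X ω i| * 1 := by gcongr; exact hCb ω
      _ = |X ω i| := mul_one _
  -- multiplying by C equals restricting to S1
  have hmulC : ∀ (g : Ω → ℝ), (∫ ω, g ω * C ω) = ∫ ω in S1, g ω := by
    intro g
    rw [← integral_indicator hS1m]
    refine integral_congr_ae (Filter.Eventually.of_forall fun ω => ?_)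
    rcases hC01 ω with h | h
    · have hω : ω ∉ S1 := by simp [hS1, h]
      simp [Set.indicator_of_notMem hω, h]
    · have hω : ω ∈ S1 := h
      simp [Set.indicator_of_mem hω, h]
  have hCp : (∫ ω, C ω) = p := by
    have h := hmulC (fun _ => (1 : ℝ))
    simpa [setIntegral_const, hp, Measure.real] using h
  have hS0 : {ω | C ω = 0} = S1ᶜ := by
    ext ω; rcases hC01 ω with h | h <;> simp [hS1, h]
  have hq : (volume {ω | C ω = 0}).toReal = 1 - p := by
    rw [hS0, prob_compl_eq_one_sub hS1m,
      ENNReal.toReal_sub_of_le prob_le_one ENNReal.one_ne_top]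
    simp [hp]
  have hm0 : ∀ i, (∫ ω in {ω | C ω = 0}, X ω i) = - ∫ ω in S1, X ω i := by
    intro i
    have h := integral_add_compl hS1m (hXi i)
    rw [hmean i] at h
    rw [hS0]
    linarith
  have hp0 : p ≠ 0 := ne_of_gt hP1
  have hp1 : (1 : ℝ) - p ≠ 0 := by
    have : p < 1 := hP1'
    linarith
  set c : ℝ := p * (1 - p) with hc
  have hc0 : c ≠ 0 := mul_ne_zero hp0 hp1
  have hM : ∀ i, (∫ ω in S1, X ω i) = c * v i := by
    intro i
    have h1 := congrFun hv i
    rw [hm0 i, hq] at h1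
    rw [h1, hc]
    field_simp
    ring
  have hW : ∀ j, (∫ ω, X ω j * C ω) = c * v j := fun j => (hmulC _).trans (hM j)
  -- the unit vector s
  set n : ℝ := Real.sqrt (∑ j, (v j) ^ 2) with hn
  have hsum_pos : 0 < ∑ j, (v j) ^ 2 := by
    rcases Function.ne_iff.mp hv0 with ⟨i, hi⟩
    refine Finset.sum_pos' (fun j _ => sq_nonneg _) ⟨i, Finset.mem_univ i, ?_⟩
    simp only [Pi.zero_apply] at hi
    positivity
  have hn0 : 0 < n := Real.sqrt_pos.mpr hsum_pos
  have hn2 : n ^ 2 = ∑ j, (v j) ^ 2 := Real.sq_sqrt hsum_pos.le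
  have hss : (∑ j, (s j) ^ 2) = 1 := by
    rw [hs]
    simp only [div_pow]
    rw [← Finset.sum_div, ← hn2, div_self (by positivity)]
  -- swap finite sums and integrals
  have intsum : ∀ (g : Fin d → Ω → ℝ) (co : Fin d → ℝ), (∀ j, Integrable (g j)) →
      (∫ ω, ∑ j, g j ω * co j) = ∑ j, (∫ ω, g j ω) * co j := by
    intro g co hg
    rw [integral_finset_sum _ (fun j _ => (hg j).mul_const (co j))]
    exact Finset.sum_congr rfl fun j _ => integral_mul_const _ _
  have hEXX : ∀ i j, (∫ ω, X ω i * X ω j) = if i = j then 1 else 0 := by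
    intro i j
    have h := hcov i j
    rwa [hmean i, zero_mul, sub_zero] at h
  constructor
  · -- part (i)
    intro i
    have hpt : ∀ ω, fdel (X ω) i * C ω
        = X ω i * C ω - ∑ j, (X ω j * C ω) * (s j * s i) := by
      intro ω
      have h2 : ∑ j, (X ω j * C ω) * (s j * s i) = (∑ j, X ω j * s j) * (s i * C ω) := by
        rw [Finset.sum_mul]
        exact Finset.sum_congr rfl fun j _ => by ring
      simp only [hf]
      rw [h2]
      ring
    have hI1 : (∫ ω, fdel (X ω) i * C ω) = c * v i - ∑ j, (c * v j) * (s j * s i) := by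
      rw [integral_congr_ae (Filter.Eventually.of_forall hpt),
        integral_sub (hXiC i) (integrable_finset_sum _ fun j _ => (hXiC j).mul_const _),
        hW i, intsum _ _ hXiC]
      congr 1
      exact Finset.sum_congr rfl fun j _ => by rw [hW j]
    have hpt0 : ∀ ω, fdel (X ω) i = X ω i - ∑ j, X ω j * (s j * s i) := by
      intro ω
      have h2 : ∑ j, X ω j * (s j * s i) = (∑ j, X ω j * s j) * s i := by
        rw [Finset.sum_mul]
        exact Finset.sum_congr rfl fun j _ => by ring
      simp only [hf]
      rw [h2]
    have hI0 : (∫ ω, fdel (X ω) i) = 0 := by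
      rw [integral_congr_ae (Filter.Eventually.of_forall hpt0),
        integral_sub (hXi i) (integrable_finset_sum _ fun j _ => (hXi j).mul_const _),
        hmean i, intsum _ _ hXi]
      simp [hmean]
    rw [hI1, hI0, zero_mul, sub_zero]
    have e1 : ∑ j, (c * v j) * (s j * s i) = (∑ j, (v j) ^ 2) * (c * s i / n) := by
      rw [Finset.sum_mul]
      refine Finset.sum_congr rfl fun j _ => ?_
      rw [hs]
      simp only []
      ring
    rw [e1, ← hn2, hs]
    simp only []
    field_simp
    ring
  · -- part (ii)
    intro A b hAb
    -- the constraint gives A v = 0, hence A s = 0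
    have hint1 : ∀ i, (∫ ω, (A.mulVec (X ω) i + b i) * C ω)
        = (∑ j, (c * v j) * A i j) + b i * p := by
      intro i
      have hpt : ∀ ω, (A.mulVec (X ω) i + b i) * C ω
          = (∑ j, (X ω j * C ω) * A i j) + b i * C ω := by
        intro ω
        simp only [Matrix.mulVec, dotProduct]
        rw [add_mul, Finset.sum_mul]
        congr 1
        exact Finset.sum_congr rfl fun j _ => by ring
      rw [integral_congr_ae (Filter.Eventually.of_forall hpt),
        integral_add (integrable_finset_sum _ fun j _ => (hXiC j).mul_const _)
          (hCint.const_mul (b i)),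
        intsum _ _ hXiC, integral_const_mul, hCp]
      congr 1
      exact Finset.sum_congr rfl fun j _ => by rw [hW j]
    have hint2 : ∀ i, (∫ ω, A.mulVec (X ω) i + b i) = b i := by
      intro i
      have hpt : ∀ ω, A.mulVec (X ω) i + b i = (∑ j, X ω j * A i j) + b i := by
        intro ω
        simp only [Matrix.mulVec, dotProduct]
        congr 1
        exact Finset.sum_congr rfl fun j _ => by ring
      rw [integral_congr_ae (Filter.Eventually.of_forall hpt),
        integral_add (integrable_finset_sum _ fun j _ => (hXi j).mul_const _)
          (integrable_const _),
        intsum _ _ hXi]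
      simp [hmean]
    have hAv : ∀ i, (∑ j, A i j * v j) = 0 := by
      intro i
      have h := hAb i
      rw [hint1 i, hint2 i, hCp] at h
      have h2 : (∑ j, (c * v j) * A i j) = 0 := by linarith
      have h3 : c * ∑ j, A i j * v j = 0 := by
        rw [Finset.mul_sum, ← h2]
        exact Finset.sum_congr rfl fun j _ => by ring
      exact (mul_eq_zero.mp h3).resolve_left hc0
    have hAs : ∀ i, (∑ j, A i j * s j) = 0 := by
      intro i
      rw [hs]
      simp only []
      rw [show (∑ j, A i j * (v j / n)) = (∑ j, A i j * v j) / n by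
        rw [Finset.sum_div]; exact Finset.sum_congr rfl fun j _ => by ring]
      rw [hAv i, zero_div]
    -- LHS = 1
    have hT : ∀ ω, (∑ i, (fdel (X ω) i - X ω i) ^ 2)
        = ∑ j, ∑ k, (X ω j * X ω k) * (s j * s k) := by
      intro ω
      have h1 : ∀ i, fdel (X ω) i - X ω i = -((∑ j, X ω j * s j) * s i) := by
        intro i; simp only [hf]; ring
      calc (∑ i, (fdel (X ω) i - X ω i) ^ 2)
          = ∑ i, (∑ j, X ω j * s j) ^ 2 * (s i) ^ 2 := by
            refine Finset.sum_congr rfl fun i _ => ?_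
            rw [h1 i]; ring
        _ = (∑ j, X ω j * s j) ^ 2 * ∑ i, (s i) ^ 2 := by rw [Finset.mul_sum]
        _ = (∑ j, X ω j * s j) ^ 2 := by rw [hss, mul_one]
        _ = ∑ j, ∑ k, (X ω j * X ω k) * (s j * s k) := by
            rw [sq, Finset.sum_mul_sum]
            exact Finset.sum_congr rfl fun j _ => Finset.sum_congr rfl fun k _ => by ring
    have hLHS : (∫ ω, ∑ i, (fdel (X ω) i - X ω i) ^ 2) = 1 := by
      rw [integral_congr_ae (Filter.Eventually.of_forall hT),
        integral_finset_sum _ (fun j _ =>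
          integrable_finset_sum _ fun k _ => (hXij j k).mul_const _)]
      have hrow : ∀ j, (∫ ω, ∑ k, (X ω j * X ω k) * (s j * s k)) = (s j) ^ 2 := by
        intro j
        rw [intsum (fun k ω => X ω j * X ω k) _ (fun k => hXij j k)]
        calc (∑ k, (∫ ω, X ω j * X ω k) * (s j * s k))
            = ∑ k, (if j = k then (1:ℝ) else 0) * (s j * s k) := by
              exact Finset.sum_congr rfl fun k _ => by rw [hEXX j k]
          _ = (s j) ^ 2 := by simp [ite_mul, sq]
      simp only [hrow]
      exact hss
    -- RHS via B = A - I
    set B : Fin d → Fin d → ℝ := fun i j => A i j - if i = j then 1 else 0 with hBdef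
    have hBx : ∀ (x : Fin d → ℝ) i, A.mulVec x i + b i - x i = (∑ j, x j * B i j) + b i := by
      intro x i
      simp only [Matrix.mulVec, dotProduct, hBdef]
      have h1 : (∑ j, x j * (A i j - if i = j then 1 else 0))
          = (∑ j, A i j * x j) - x i := by
        simp only [mul_sub]
        rw [Finset.sum_sub_distrib]
        congr 1
        · exact Finset.sum_congr rfl fun j _ => by ring
        · simp
      rw [h1]
      ring
    have hgi : ∀ i, (∫ ω, (A.mulVec (X ω) i + b i - X ω i) ^ 2)
        = (∑ j, (B i j) ^ 2) + (b i) ^ 2 := by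
      intro i
      have hpt : ∀ ω, (A.mulVec (X ω) i + b i - X ω i) ^ 2
          = (∑ j, ∑ k, (X ω j * X ω k) * (B i j * B i k))
            + ((∑ j, X ω j * (2 * B i j * b i)) + (b i) ^ 2) := by
        intro ω
        rw [hBx]
        have hD : (∑ j, X ω j * B i j) ^ 2
            = ∑ j, ∑ k, (X ω j * X ω k) * (B i j * B i k) := by
          rw [sq, Finset.sum_mul_sum]
          exact Finset.sum_congr rfl fun j _ => Finset.sum_congr rfl fun k _ => by ring
        have hL : (∑ j, X ω j * (2 * B i j * b i))
            = 2 * (∑ j, X ω j * B i j) * b i := by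
          rw [Finset.mul_sum, Finset.sum_mul]
          exact Finset.sum_congr rfl fun j _ => by ring
        rw [← hD, hL]
        ring
      have i1 : Integrable (fun ω => ∑ j, ∑ k, (X ω j * X ω k) * (B i j * B i k)) :=
        integrable_finset_sum _ fun j _ =>
          integrable_finset_sum _ fun k _ => (hXij j k).mul_const _
      have i2 : Integrable (fun ω => ∑ j, X ω j * (2 * B i j * b i)) :=
        integrable_finset_sum _ fun j _ => (hXi j).mul_const _
      have i3 : Integrable (fun ω => (∑ j, X ω j * (2 * B i j * b i)) + (b i) ^ 2) :=
        i2.add (integrable_const _)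
      rw [integral_congr_ae (Filter.Eventually.of_forall hpt),
        integral_add i1 i3, integral_add i2 (integrable_const _),
        intsum _ _ hXi,
        integral_finset_sum _ (fun j _ =>
          integrable_finset_sum _ fun k _ => (hXij j k).mul_const _)]
      have hrow : ∀ j, (∫ ω, ∑ k, (X ω j * X ω k) * (B i j * B i k)) = (B i j) ^ 2 := by
        intro j
        rw [intsum (fun k ω => X ω j * X ω k) _ (fun k => hXij j k)]
        calc (∑ k, (∫ ω, X ω j * X ω k) * (B i j * B i k))
            = ∑ k, (if j = k then (1:ℝ) else 0) * (B i j * B i k) := by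
              exact Finset.sum_congr rfl fun k _ => by rw [hEXX j k]
          _ = (B i j) ^ 2 := by simp [ite_mul, sq]
      simp only [hrow, hmean]
      simp
    have hg_int : ∀ i, Integrable (fun ω => (A.mulVec (X ω) i + b i - X ω i) ^ 2) := by
      intro i
      have hpt : ∀ ω, (A.mulVec (X ω) i + b i - X ω i) ^ 2
          = (∑ j, ∑ k, (X ω j * X ω k) * (B i j * B i k))
            + ((∑ j, X ω j * (2 * B i j * b i)) + (b i) ^ 2) := by
        intro ω
        rw [hBx]
        have hD : (∑ j, X ω j * B i j) ^ 2
            = ∑ j, ∑ k, (X ω j * X ω k) * (B i j * B i k) := by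
          rw [sq, Finset.sum_mul_sum]
          exact Finset.sum_congr rfl fun j _ => Finset.sum_congr rfl fun k _ => by ring
        have hL : (∑ j, X ω j * (2 * B i j * b i))
            = 2 * (∑ j, X ω j * B i j) * b i := by
          rw [Finset.mul_sum, Finset.sum_mul]
          exact Finset.sum_congr rfl fun j _ => by ring
        rw [← hD, hL]
        ring
      refine Integrable.congr ?_ (Filter.Eventually.of_forall fun ω => (hpt ω).symm)
      exact ((integrable_finset_sum _ fun j _ =>
            integrable_finset_sum _ fun k _ => (hXij j k).mul_const _).add
        ((integrable_finset_sum _ fun j _ => (hXi j).mul_const _).add (integrable_const _)))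
    have hRHS : (∫ ω, ∑ i, (A.mulVec (X ω) i + b i - X ω i) ^ 2)
        = ∑ i, ((∑ j, (B i j) ^ 2) + (b i) ^ 2) := by
      rw [integral_finset_sum _ (fun i _ => hg_int i)]
      exact Finset.sum_congr rfl fun i _ => hgi i
    have hCS : ∀ i, (s i) ^ 2 ≤ ∑ j, (B i j) ^ 2 := by
      intro i
      have h1 : (∑ j, B i j * s j) = - s i := by
        have h2 : (∑ j, B i j * s j) = (∑ j, A i j * s j) - s i := by
          simp only [hBdef, sub_mul]
          rw [Finset.sum_sub_distrib]
          congr 1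
          simp
        rw [h2, hAs i, zero_sub]
      calc (s i) ^ 2 = (∑ j, B i j * s j) ^ 2 := by rw [h1]; ring
        _ ≤ (∑ j, (B i j) ^ 2) * ∑ j, (s j) ^ 2 := Finset.sum_mul_sq_le_sq_mul_sq _ _ _
        _ = ∑ j, (B i j) ^ 2 := by rw [hss, mul_one]
    rw [hLHS, hRHS]
    calc (1 : ℝ) = ∑ i, (s i) ^ 2 := hss.symm
      _ ≤ ∑ i, ((∑ j, (B i j) ^ 2) + (b i) ^ 2) :=
          Finset.sum_le_sum fun i _ => (hCS i).trans (le_add_of_nonneg_right (sq_nonneg _))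
end

section
/- Let X : Ω → ℝ^d and Z : Ω → ℝ^k be random vectors on a probability space, each with finite second moment. Let Σ_XX = Cov(X,X) ∈ ℝ^{d×d} and Σ_XZ = Cov(X,Z) ∈ ℝ^{d×k}, and assume Im(Σ_XZ) ⊆ Im(Σ_XX). Let R be the symmetric positive semidefinite matrix with R² = Σ_XX, let W be the Moore–Penrose pseudoinverse of R, let N be the Moore–Penrose pseudoinverse of W·Σ_XZ, and define Â := I_d − 2·R·(W·Σ_XZ)·N·W and b̂ := E[X] − Â·E[X]. Then (i) Cov(Â·X + b̂, Z) = −Cov(X,Z), and (ii) for every A ∈ ℝ^{d×d} and b ∈ ℝ^d satisfying Cov(A·X + b, Z) = −Cov(X,Z), one has E[‖Â·X + b̂ − X‖²] ≤ E[‖A·X + b − X‖²]. (LEACE-Switch: Â, b̂ solve the minimal-disturbance affine concept-switching problem.) -/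
open MeasureTheory Matrix

/-- The cross-covariance matrix of two random vectors. -/
noncomputable def crossCov {Ω : Type*} [MeasureSpace Ω] {m k : ℕ}
    (X : Ω → Fin m → ℝ) (Z : Ω → Fin k → ℝ) : Matrix (Fin m) (Fin k) ℝ :=
  Matrix.of fun i j => (∫ ω, X ω i * Z ω j) - (∫ ω, X ω i) * (∫ ω, Z ω j)

/-- The componentwise mean of a random vector. -/
noncomputable def vmean {Ω : Type*} [MeasureSpace Ω] {m : ℕ}
    (X : Ω → Fin m → ℝ) : Fin m → ℝ :=
  fun i => ∫ ω, X ω i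

section Aux

variable {Ω : Type*} [MeasureSpace Ω] [IsProbabilityMeasure (volume : Measure Ω)]

lemma my_integrable_of_sq {f : Ω → ℝ} (hm : AEStronglyMeasurable f volume)
    (h2 : Integrable (fun ω => f ω ^ 2)) : Integrable f := by
  refine (h2.add (integrable_const 1)).mono' hm ?_
  filter_upwards with ω
  simp only [Real.norm_eq_abs, Pi.add_apply]
  nlinarith [abs_nonneg (f ω), sq_abs (f ω), sq_nonneg (|f ω| - 1)]

omit [IsProbabilityMeasure (volume : Measure Ω)] in
lemma my_integrable_mul {f g : Ω → ℝ} (hm : AEStronglyMeasurable (fun ω => f ω * g ω) volume)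
    (hf2 : Integrable (fun ω => f ω ^ 2)) (hg2 : Integrable (fun ω => g ω ^ 2)) :
    Integrable (fun ω => f ω * g ω) := by
  refine (hf2.add hg2).mono' hm ?_
  filter_upwards with ω
  simp only [Real.norm_eq_abs, abs_mul, Pi.add_apply]
  nlinarith [sq_nonneg (|f ω| - |g ω|), sq_abs (f ω), sq_abs (g ω), abs_nonneg (f ω),
    abs_nonneg (g ω)]

lemma crossCov_affine {d k : ℕ} (X : Ω → Fin d → ℝ) (Z : Ω → Fin k → ℝ)
    (hXi : ∀ i, Integrable (fun ω => X ω i))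
    (hZj : ∀ j, Integrable (fun ω => Z ω j))
    (hXZ : ∀ i j, Integrable (fun ω => X ω i * Z ω j))
    (A : Matrix (Fin d) (Fin d) ℝ) (b : Fin d → ℝ) :
    crossCov (fun ω => A.mulVec (X ω) + b) Z = A * crossCov X Z := by
  ext i j
  have h1 : (∫ ω, (A.mulVec (X ω) + b) i * Z ω j)
      = (∑ l, A i l * ∫ ω, X ω l * Z ω j) + b i * ∫ ω, Z ω j := by
    have he : ∀ ω, (A.mulVec (X ω) + b) i * Z ω j
        = (∑ l, A i l * (X ω l * Z ω j)) + b i * Z ω j := by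
      intro ω
      simp only [Pi.add_apply, Matrix.mulVec, dotProduct, add_mul, Finset.sum_mul]
      congr 1
      exact Finset.sum_congr rfl fun l _ => by ring
    simp only [he]
    rw [integral_add (integrable_finset_sum _ fun l _ => (hXZ l j).const_mul _)
        ((hZj j).const_mul _), integral_finset_sum _ fun l _ => (hXZ l j).const_mul _]
    simp only [MeasureTheory.integral_const_mul]
  have h2 : (∫ ω, (A.mulVec (X ω) + b) i)
      = (∑ l, A i l * ∫ ω, X ω l) + b i := by
    have he : ∀ ω, (A.mulVec (X ω) + b) i = (∑ l, A i l * X ω l) + b i := by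
      intro ω; simp [Matrix.mulVec, dotProduct]
    simp only [he]
    rw [integral_add (integrable_finset_sum _ fun l _ => (hXi l).const_mul _)
        (integrable_const _), integral_finset_sum _ fun l _ => (hXi l).const_mul _]
    simp only [MeasureTheory.integral_const_mul, integral_const, measure_univ,
      ENNReal.toReal_one, probReal_univ, smul_eq_mul, one_mul]
  simp only [crossCov, Matrix.of_apply, Matrix.mul_apply]
  rw [h1, h2, add_mul, Finset.sum_mul, add_sub_add_right_eq_sub, ← Finset.sum_sub_distrib]
  exact Finset.sum_congr rfl fun l _ => by ring

lemma my_integrable_sq_affine {d : ℕ} (X : Ω → Fin d → ℝ)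
    (hXi : ∀ i, Integrable (fun ω => X ω i))
    (hXX : ∀ i j, Integrable (fun ω => X ω i * X ω j))
    (v : Fin d → ℝ) (c : ℝ) :
    Integrable (fun ω => (∑ l, v l * X ω l + c) ^ 2) := by
  have he : ∀ ω, (∑ l, v l * X ω l + c) ^ 2
      = (∑ l, ∑ m, v l * v m * (X ω l * X ω m)) + ((2 * c) * ∑ l, v l * X ω l + c ^ 2) := by
    intro ω
    have hs : (∑ l, v l * X ω l) ^ 2 = ∑ l, ∑ m, v l * v m * (X ω l * X ω m) := by
      rw [sq, Finset.sum_mul_sum]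
      exact Finset.sum_congr rfl fun l _ => Finset.sum_congr rfl fun m _ => by ring
    calc (∑ l, v l * X ω l + c) ^ 2
        = (∑ l, v l * X ω l) ^ 2 + ((2 * c) * ∑ l, v l * X ω l + c ^ 2) := by ring
      _ = _ := by rw [hs]
  have hint1 : Integrable (fun ω => ∑ l, ∑ m, v l * v m * (X ω l * X ω m)) :=
    integrable_finset_sum _ fun l _ => integrable_finset_sum _ fun m _ => (hXX l m).const_mul _
  have hint2 : Integrable (fun ω => (2 * c) * ∑ l, v l * X ω l + c ^ 2) :=
    ((integrable_finset_sum _ fun l _ => (hXi l).const_mul _).const_mul _).add (integrable_const _)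
  exact (hint1.add hint2).congr (Filter.Eventually.of_forall fun ω => (he ω).symm)

lemma integral_sq_affine {d : ℕ} (X : Ω → Fin d → ℝ)
    (hXi : ∀ i, Integrable (fun ω => X ω i))
    (hXX : ∀ i j, Integrable (fun ω => X ω i * X ω j))
    (v : Fin d → ℝ) (c : ℝ) :
    ∫ ω, (∑ l, v l * X ω l + c) ^ 2
      = (∑ l, ∑ m, v l * v m * crossCov X X l m) + (∑ l, v l * vmean X l + c) ^ 2 := by
  have he : ∀ ω, (∑ l, v l * X ω l + c) ^ 2
      = (∑ l, ∑ m, v l * v m * (X ω l * X ω m)) + ((2 * c) * ∑ l, v l * X ω l + c ^ 2) := by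
    intro ω
    have hs : (∑ l, v l * X ω l) ^ 2 = ∑ l, ∑ m, v l * v m * (X ω l * X ω m) := by
      rw [sq, Finset.sum_mul_sum]
      exact Finset.sum_congr rfl fun l _ => Finset.sum_congr rfl fun m _ => by ring
    calc (∑ l, v l * X ω l + c) ^ 2
        = (∑ l, v l * X ω l) ^ 2 + ((2 * c) * ∑ l, v l * X ω l + c ^ 2) := by ring
      _ = _ := by rw [hs]
  simp only [he]
  have hint1 : Integrable (fun ω => ∑ l, ∑ m, v l * v m * (X ω l * X ω m)) :=
    integrable_finset_sum _ fun l _ => integrable_finset_sum _ fun m _ => (hXX l m).const_mul _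
  have hint2 : Integrable (fun ω => (2 * c) * ∑ l, v l * X ω l + c ^ 2) :=
    ((integrable_finset_sum _ fun l _ => (hXi l).const_mul _).const_mul _).add (integrable_const _)
  have step1 : (∫ ω, ∑ l, ∑ m, v l * v m * (X ω l * X ω m))
      = ∑ l, ∑ m, v l * v m * ∫ ω, X ω l * X ω m := by
    rw [integral_finset_sum _ fun l _ => integrable_finset_sum _ fun m _ => (hXX l m).const_mul _]
    refine Finset.sum_congr rfl fun l _ => ?_
    rw [integral_finset_sum _ fun m _ => (hXX l m).const_mul _]
    exact Finset.sum_congr rfl fun m _ => MeasureTheory.integral_const_mul _ _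
  have step2 : (∫ ω, (2 * c) * ∑ l, v l * X ω l + c ^ 2)
      = (2 * c) * (∑ l, v l * vmean X l) + c ^ 2 := by
    rw [integral_add ((integrable_finset_sum _ fun l _ => (hXi l).const_mul _).const_mul _)
        (integrable_const _), MeasureTheory.integral_const_mul,
      integral_finset_sum _ fun l _ => (hXi l).const_mul _]
    simp only [MeasureTheory.integral_const_mul, integral_const, measure_univ,
      ENNReal.toReal_one, probReal_univ, smul_eq_mul, one_mul, vmean]
  rw [integral_add hint1 hint2, step1, step2]
  have e1 : (∑ l, v l * vmean X l + c) ^ 2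
      = (∑ l, ∑ m, v l * v m * (vmean X l * vmean X m))
        + ((2 * c) * ∑ l, v l * vmean X l + c ^ 2) := by
    have hs : (∑ l, v l * vmean X l) ^ 2 = ∑ l, ∑ m, v l * v m * (vmean X l * vmean X m) := by
      rw [sq, Finset.sum_mul_sum]
      exact Finset.sum_congr rfl fun l _ => Finset.sum_congr rfl fun m _ => by ring
    calc (∑ l, v l * vmean X l + c) ^ 2
        = (∑ l, v l * vmean X l) ^ 2 + ((2 * c) * ∑ l, v l * vmean X l + c ^ 2) := by ring
      _ = _ := by rw [hs]
  rw [e1]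
  have e2 : (∑ l, ∑ m, v l * v m * crossCov X X l m)
      = (∑ l, ∑ m, v l * v m * ∫ ω, X ω l * X ω m)
        - ∑ l, ∑ m, v l * v m * (vmean X l * vmean X m) := by
    rw [← Finset.sum_sub_distrib]
    refine Finset.sum_congr rfl fun l _ => ?_
    rw [← Finset.sum_sub_distrib]
    refine Finset.sum_congr rfl fun m _ => ?_
    simp only [crossCov, Matrix.of_apply, vmean]
    ring
  rw [e2]
  ring

end Aux

/-- LEACE-Switch: With `Σ_XX = Cov(X,X)`, `Σ_XZ = Cov(X,Z)`,
`Im(Σ_XZ) ⊆ Im(Σ_XX)`, `R` the symmetric PSD square root of `Σ_XX`, `W = R⁺`,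
`N = (W·Σ_XZ)⁺`, the matrix `Â = I − 2·R·(W·Σ_XZ)·N·W` and bias
`b̂ = E[X] − Â·E[X]` satisfy `Cov(Â·X + b̂, Z) = −Cov(X,Z)` and minimize
`E[‖A·X + b − X‖²]` among all affine maps with `Cov(A·X + b, Z) = −Cov(X,Z)`. -/
theorem LEACE_switch_optimality
    {Ω : Type*} [MeasureSpace Ω] [IsProbabilityMeasure (volume : Measure Ω)]
    {d k : ℕ} (X : Ω → Fin d → ℝ) (Z : Ω → Fin k → ℝ)
    (hXm : Measurable X) (hZm : Measurable Z)
    (hX2 : Integrable (fun ω => ∑ i, (X ω i) ^ 2))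
    (hZ2 : Integrable (fun ω => ∑ j, (Z ω j) ^ 2))
    (hIm : ∀ j, ∃ x : Fin d → ℝ,
      (crossCov X X).mulVec x = fun i => crossCov X Z i j)
    (R W : Matrix (Fin d) (Fin d) ℝ) (N : Matrix (Fin k) (Fin d) ℝ)
    (hR : R.PosSemidef) (hRS : R * R = crossCov X X)
    (hW1 : R * W * R = R) (hW2 : W * R * W = W)
    (hW3 : (R * W)ᵀ = R * W) (hW4 : (W * R)ᵀ = W * R)
    (hN1 : (W * crossCov X Z) * N * (W * crossCov X Z) = W * crossCov X Z)
    (hN2 : N * (W * crossCov X Z) * N = N)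
    (hN3 : ((W * crossCov X Z) * N)ᵀ = (W * crossCov X Z) * N)
    (hN4 : (N * (W * crossCov X Z))ᵀ = N * (W * crossCov X Z))
    (Ahat : Matrix (Fin d) (Fin d) ℝ) (bhat : Fin d → ℝ)
    (hAhat : Ahat = 1 - (2 : ℝ) • (R * (W * crossCov X Z) * N * W))
    (hbhat : bhat = vmean X - Ahat.mulVec (vmean X)) :
    crossCov (fun ω => Ahat.mulVec (X ω) + bhat) Z = -(crossCov X Z)
    ∧
    ∀ (A : Matrix (Fin d) (Fin d) ℝ) (b : Fin d → ℝ),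
      crossCov (fun ω => A.mulVec (X ω) + b) Z = -(crossCov X Z) →
      (∫ ω, ∑ i, (Ahat.mulVec (X ω) i + bhat i - X ω i) ^ 2)
        ≤ ∫ ω, ∑ i, (A.mulVec (X ω) i + b i - X ω i) ^ 2 := by
  -- abbreviations
  set Sxx := crossCov X X with hSxx
  set Sxz := crossCov X Z with hSxz
  set μ := vmean X with hμ
  -- measurability of components
  have mX : ∀ i, Measurable fun ω => X ω i := fun i => (measurable_pi_apply i).comp hXm
  have mZ : ∀ j, Measurable fun ω => Z ω j := fun j => (measurable_pi_apply j).comp hZm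
  -- integrability of components
  have hXsq : ∀ i, Integrable (fun ω => X ω i ^ 2) := by
    intro i
    refine hX2.mono' ((mX i).pow_const 2).aestronglyMeasurable ?_
    filter_upwards with ω
    rw [Real.norm_eq_abs, abs_of_nonneg (sq_nonneg _)]
    exact Finset.single_le_sum (f := fun j => X ω j ^ 2) (fun j _ => sq_nonneg _)
      (Finset.mem_univ i)
  have hZsq : ∀ j, Integrable (fun ω => Z ω j ^ 2) := by
    intro j
    refine hZ2.mono' ((mZ j).pow_const 2).aestronglyMeasurable ?_
    filter_upwards with ω
    rw [Real.norm_eq_abs, abs_of_nonneg (sq_nonneg _)]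
    exact Finset.single_le_sum (f := fun l => Z ω l ^ 2) (fun l _ => sq_nonneg _)
      (Finset.mem_univ j)
  have hXi : ∀ i, Integrable (fun ω => X ω i) := fun i =>
    my_integrable_of_sq (mX i).aestronglyMeasurable (hXsq i)
  have hZj : ∀ j, Integrable (fun ω => Z ω j) := fun j =>
    my_integrable_of_sq (mZ j).aestronglyMeasurable (hZsq j)
  have hXZ : ∀ i j, Integrable (fun ω => X ω i * Z ω j) := fun i j =>
    my_integrable_mul ((mX i).mul (mZ j)).aestronglyMeasurable (hXsq i) (hZsq j)
  have hXX : ∀ i j, Integrable (fun ω => X ω i * X ω j) := fun i j =>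
    my_integrable_mul ((mX i).mul (mX j)).aestronglyMeasurable (hXsq i) (hXsq j)
  -- matrix facts
  have hRt : Rᵀ = R := (Matrix.conjTranspose_eq_transpose_of_trivial R).symm.trans hR.1.eq
  -- Sxz = Sxx * T
  obtain ⟨T, hT⟩ : ∃ T : Matrix (Fin d) (Fin k) ℝ, Sxx * T = Sxz := by
    refine ⟨Matrix.of fun i j => (hIm j).choose i, ?_⟩
    ext i j
    have := congrFun ((hIm j).choose_spec) i
    simpa [Matrix.mul_apply, Matrix.mulVec, dotProduct] using this
  have hRWS : R * (W * Sxz) = Sxz := by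
    have hzz : Sxz = R * (R * T) := by rw [← Matrix.mul_assoc, hRS, hT]
    calc R * (W * Sxz) = R * (W * (R * (R * T))) := by rw [← hzz]
      _ = ((R * W) * R) * (R * T) := by simp only [Matrix.mul_assoc]
      _ = R * (R * T) := by rw [hW1]
      _ = Sxz := hzz.symm
  have hWRS : (W * R) * (W * Sxz) = W * Sxz := by
    calc (W * R) * (W * Sxz) = ((W * R) * W) * Sxz := by simp only [Matrix.mul_assoc]
      _ = W * Sxz := by rw [hW2]
  have hStWR : (W * Sxz)ᵀ * (W * R) = (W * Sxz)ᵀ := by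
    calc (W * Sxz)ᵀ * (W * R) = (W * Sxz)ᵀ * (W * R)ᵀ := by rw [hW4]
      _ = ((W * R) * (W * Sxz))ᵀ := (Matrix.transpose_mul _ _).symm
      _ = (W * Sxz)ᵀ := by rw [hWRS]
  have hSN : (W * Sxz) * N = Nᵀ * (W * Sxz)ᵀ := hN3.symm.trans (Matrix.transpose_mul _ _)
  have hNWR : N * (W * R) = N := by
    calc N * (W * R) = (N * (W * Sxz) * N) * (W * R) := by rw [hN2]
      _ = N * (((W * Sxz) * N) * (W * R)) := by simp only [Matrix.mul_assoc]
      _ = N * ((Nᵀ * (W * Sxz)ᵀ) * (W * R)) := by rw [hSN]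
      _ = N * (Nᵀ * ((W * Sxz)ᵀ * (W * R))) := by simp only [Matrix.mul_assoc]
      _ = N * (Nᵀ * (W * Sxz)ᵀ) := by rw [hStWR]
      _ = N * ((W * Sxz) * N) := by rw [hSN]
      _ = N := by rw [← Matrix.mul_assoc, hN2]
  -- constraint satisfied by Ahat
  have hAc_hat : Ahat * Sxz = -Sxz := by
    have hkey : (R * (W * Sxz) * N * W) * Sxz = Sxz := by
      calc (R * (W * Sxz) * N * W) * Sxz
          = R * (((W * Sxz) * N * (W * Sxz))) := by simp only [Matrix.mul_assoc]
        _ = R * (W * Sxz) := by rw [hN1]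
        _ = Sxz := hRWS
    rw [hAhat, Matrix.sub_mul, Matrix.one_mul, Matrix.smul_mul, hkey, two_smul]
    abel
  have part1 : crossCov (fun ω => Ahat.mulVec (X ω) + bhat) Z = -Sxz := by
    rw [crossCov_affine X Z hXi hZj hXZ Ahat bhat]
    exact hAc_hat
  refine ⟨part1, ?_⟩
  intro A b hc
  -- pointwise rewriting lemma
  have hsub : ∀ (B : Matrix (Fin d) (Fin d) ℝ) (x : Fin d → ℝ) (i : Fin d),
      (∑ l, (B - 1) i l * x l) = B.mulVec x i - x i := by
    intro B x i
    simp [Matrix.sub_apply, Matrix.one_apply, sub_mul, Finset.sum_sub_distrib,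
      Matrix.mulVec, dotProduct, ite_mul, Finset.sum_ite_eq, Finset.mem_univ]
  -- objective formula
  have obj : ∀ (B : Matrix (Fin d) (Fin d) ℝ) (c : Fin d → ℝ),
      (∫ ω, ∑ i, (B.mulVec (X ω) i + c i - X ω i) ^ 2)
        = (∑ i, ∑ l, ∑ m, (B - 1) i l * (B - 1) i m * Sxx l m)
          + ∑ i, (∑ l, (B - 1) i l * μ l + c i) ^ 2 := by
    intro B c
    have hpt : ∀ ω i, B.mulVec (X ω) i + c i - X ω i = ∑ l, (B - 1) i l * X ω l + c i := by
      intro ω i; rw [hsub]; ring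
    simp only [hpt]
    rw [integral_finset_sum _ fun i _ =>
      my_integrable_sq_affine X hXi hXX (fun l => (B - 1) i l) (c i)]
    rw [← Finset.sum_add_distrib]
    exact Finset.sum_congr rfl fun i _ =>
      integral_sq_affine X hXi hXX (fun l => (B - 1) i l) (c i)
  -- quadratic form as Frobenius norm of M * R
  have quad : ∀ B : Matrix (Fin d) (Fin d) ℝ,
      (∑ i, ∑ l, ∑ m, B i l * B i m * Sxx l m) = ∑ i, ∑ j, ((B * R) i j) ^ 2 := by
    intro B
    have hBR : B * Sxx * Bᵀ = (B * R) * (B * R)ᵀ := by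
      rw [Matrix.transpose_mul, hRt, ← hRS]
      simp only [Matrix.mul_assoc]
    have h2 : ∀ i, (B * Sxx * Bᵀ) i i = ∑ j, ((B * R) i j) ^ 2 := by
      intro i
      rw [hBR]
      simp only [Matrix.mul_apply, Matrix.transpose_apply, sq]
    refine Finset.sum_congr rfl fun i _ => ?_
    rw [← h2 i]
    simp only [Matrix.mul_apply, Matrix.transpose_apply, Finset.sum_mul]
    rw [Finset.sum_comm]
    exact Finset.sum_congr rfl fun l _ => Finset.sum_congr rfl fun m _ => by ring
  -- projection P
  obtain ⟨P, hPdef⟩ : ∃ P : Matrix (Fin d) (Fin d) ℝ, P = (W * Sxz) * N := ⟨_, rfl⟩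
  have hPt : Pᵀ = P := by rw [hPdef]; exact hN3
  have hPP : P * P = P := by
    rw [hPdef]
    calc ((W * Sxz) * N) * ((W * Sxz) * N) = ((W * Sxz) * N * (W * Sxz)) * N := by
          simp only [Matrix.mul_assoc]
      _ = (W * Sxz) * N := by rw [hN1]
  have Fsplit : ∀ G : Matrix (Fin d) (Fin d) ℝ,
      (∑ i, ∑ j, (G i j) ^ 2)
        = (∑ i, ∑ j, ((G * P) i j) ^ 2) + ∑ i, ∑ j, ((G * (1 - P)) i j) ^ 2 := by
    intro G
    have hdiag : ∀ H : Matrix (Fin d) (Fin d) ℝ,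
        (∑ i, ∑ j, (H i j) ^ 2) = ∑ i, (H * Hᵀ) i i := by
      intro H; simp [Matrix.mul_apply, Matrix.transpose_apply, sq]
    have h1P : (1 - P) * (1 - P) = 1 - P := by
      simp only [Matrix.mul_sub, Matrix.sub_mul, Matrix.one_mul, Matrix.mul_one, hPP]
      abel
    have hmat : (G * P) * (G * P)ᵀ + (G * (1 - P)) * (G * (1 - P))ᵀ = G * Gᵀ := by
      rw [Matrix.transpose_mul, Matrix.transpose_mul, hPt, Matrix.transpose_sub,
        Matrix.transpose_one, hPt]
      calc G * P * (P * Gᵀ) + G * (1 - P) * ((1 - P) * Gᵀ)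
          = G * ((P * P) * Gᵀ) + G * (((1 - P) * (1 - P)) * Gᵀ) := by
            simp only [Matrix.mul_assoc]
        _ = G * (P * Gᵀ) + G * ((1 - P) * Gᵀ) := by rw [hPP, h1P]
        _ = G * ((P + (1 - P)) * Gᵀ) := by rw [Matrix.add_mul, Matrix.mul_add]
        _ = G * Gᵀ := by rw [add_sub_cancel, Matrix.one_mul]
    rw [hdiag G, hdiag (G * P), hdiag (G * (1 - P)), ← Finset.sum_add_distrib, ← hmat]
    exact Finset.sum_congr rfl fun i _ => by rw [Matrix.add_apply]
  -- the two projected matrices coincide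
  have hMhat : Ahat - 1 = (-2 : ℝ) • (R * (W * Sxz) * N * W) := by
    rw [hAhat, sub_sub_cancel_left, ← neg_smul]
  have hMhatR : (Ahat - 1) * R = (-2 : ℝ) • (Sxz * N) := by
    rw [hMhat, Matrix.smul_mul]
    congr 1
    calc (R * (W * Sxz) * N * W) * R = (R * (W * Sxz)) * (N * (W * R)) := by
          simp only [Matrix.mul_assoc]
      _ = (R * (W * Sxz)) * N := by rw [hNWR]
      _ = Sxz * N := by rw [hRWS]
  have hAc : A * Sxz = -Sxz := by
    rw [← crossCov_affine X Z hXi hZj hXZ A b]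
    exact hc
  have hMc : (A - 1) * Sxz = (-2 : ℝ) • Sxz := by
    rw [Matrix.sub_mul, Matrix.one_mul, hAc, neg_smul, two_smul]
    abel
  have hGP : ((A - 1) * R) * P = (-2 : ℝ) • (Sxz * N) := by
    rw [hPdef]
    calc ((A - 1) * R) * ((W * Sxz) * N)
        = ((A - 1) * (R * (W * Sxz))) * N := by simp only [Matrix.mul_assoc]
      _ = ((A - 1) * Sxz) * N := by rw [hRWS]
      _ = ((-2 : ℝ) • Sxz) * N := by rw [hMc]
      _ = (-2 : ℝ) • (Sxz * N) := Matrix.smul_mul _ _ _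
  -- zero bias term for Ahat
  have h0 : (∑ i, (∑ l, (Ahat - 1) i l * μ l + bhat i) ^ 2) = 0 := by
    refine Finset.sum_eq_zero fun i _ => ?_
    rw [hsub, hbhat]
    simp only [Pi.sub_apply]
    ring
  -- nonnegativity facts
  have hnn1 : (0 : ℝ) ≤ ∑ i, (∑ l, (A - 1) i l * μ l + b i) ^ 2 :=
    Finset.sum_nonneg fun i _ => sq_nonneg _
  have hnn2 : (0 : ℝ) ≤ ∑ i, ∑ j, ((((A - 1) * R) * (1 - P)) i j) ^ 2 :=
    Finset.sum_nonneg fun i _ => Finset.sum_nonneg fun j _ => sq_nonneg _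
  -- conclude
  rw [obj Ahat bhat, obj A b, h0, add_zero, quad (Ahat - 1), quad (A - 1)]
  have hFeq : (∑ i, ∑ j, (((Ahat - 1) * R) i j) ^ 2)
      = ∑ i, ∑ j, ((((A - 1) * R) * P) i j) ^ 2 := by
    rw [hMhatR, ← hGP]
  rw [hFeq, Fsplit ((A - 1) * R)]
  linarith
end

section
/- Let X be a random vector in ℝ^d on a probability space with E[‖X‖²] < ∞, mean E[X] = 0, and covariance matrix Cov(X,X) = I_d. Let C be a {0,1}-valued random variable on the same space with 0 < P(C=1) < 1, and suppose the vector v := E[X | C=1] − E[X | C=0] is nonzero; set s := v/‖v‖. Define f_switch : ℝ^d → ℝ^d by f_switch(h) = h − 2⟨h,s⟩·s. Then (i) Cov(f_switch(X), C) = −Cov(X,C), and (ii) for every matrix A ∈ ℝ^{d×d} and vector b ∈ ℝ^d such that Cov(AX + b, C) = −Cov(X,C), one has E[‖f_switch(X) − X‖²] ≤ E[‖AX + b − X‖²]. That is, the Householder-reflection steering map is an optimal affine concept-switching map (vanilla steering in switching mode is a special case of LEACE-Switch). -/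
open MeasureTheory Matrix

/-- Auxiliary: integral of a square of an affine functional of a standardized vector. -/
lemma quad_int_aux {Ω : Type*} [MeasureSpace Ω] [IsProbabilityMeasure (volume : Measure Ω)]
    {d : ℕ} (X : Ω → Fin d → ℝ)
    (hXij : ∀ i j, Integrable (fun ω => X ω i * X ω j))
    (hXint : ∀ i, Integrable (fun ω => X ω i))
    (hmean : ∀ i, (∫ ω, X ω i) = 0)
    (hIij : ∀ i j, (∫ ω, X ω i * X ω j) = if i = j then 1 else 0)
    (w : Fin d → ℝ) (t : ℝ) :
    Integrable (fun ω => (∑ j, w j * X ω j + t)^2) ∧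
    (∫ ω, (∑ j, w j * X ω j + t)^2) = (∑ j, (w j)^2) + t^2 := by
  have hF1 : Integrable (fun ω => ∑ j, ∑ k, (w j * w k) * (X ω j * X ω k)) :=
    integrable_finset_sum _ fun j _ =>
      integrable_finset_sum _ fun k _ => (hXij j k).const_mul _
  have hF2 : Integrable (fun ω => ∑ j, (2*t*w j) * X ω j) :=
    integrable_finset_sum _ fun j _ => (hXint j).const_mul _
  have heq : (fun ω => (∑ j, w j * X ω j + t)^2) = fun ω =>
      (∑ j, ∑ k, (w j * w k) * (X ω j * X ω k)) + ((∑ j, (2*t*w j) * X ω j) + t^2) := by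
    funext ω
    have h1 : (∑ j, w j * X ω j + t)^2
        = (∑ j, w j * X ω j) * (∑ k, w k * X ω k) + ((∑ j, w j * X ω j) * (2*t) + t^2) := by
      ring
    rw [h1, Finset.sum_mul_sum, Finset.sum_mul]
    congr 1
    · exact Finset.sum_congr rfl fun j _ => Finset.sum_congr rfl fun k _ => by ring
    · congr 1
      exact Finset.sum_congr rfl fun j _ => by ring
  have hF3 : Integrable (fun ω => (∑ j, (2*t*w j) * X ω j) + t^2) :=
    hF2.add (integrable_const _)
  have hF4 : Integrable (fun ω =>
      (∑ j, ∑ k, (w j * w k) * (X ω j * X ω k)) + ((∑ j, (2*t*w j) * X ω j) + t^2)) :=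
    hF1.add hF3
  constructor
  · rw [heq]; exact hF4
  · rw [heq, integral_add hF1 hF3,
      integral_add hF2 (integrable_const (t^2)),
      integral_finset_sum _ (fun j _ => integrable_finset_sum _
        fun k _ => (hXij j k).const_mul _),
      integral_finset_sum _ (fun j _ => (hXint j).const_mul _)]
    simp only [integral_const_mul, hmean, mul_zero, Finset.sum_const_zero, zero_add,
      integral_const, measure_univ, ENNReal.toReal_one, probReal_univ, one_smul]
    congr 1
    refine Finset.sum_congr rfl fun j _ => ?_
    rw [integral_finset_sum _ (fun k _ => (hXij j k).const_mul _)]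
    simp [integral_const_mul, hIij, mul_ite, Finset.sum_ite_eq, sq]

/-- For a standardized random vector `X` (`E[X]=0`, `Cov(X,X)=I`) and a
binary concept variable `C` with `0 < P(C=1) < 1` and nonzero steering vector
`v = E[X|C=1] − E[X|C=0]`, `s = v/‖v‖`, the Householder-reflection map
`f_switch(h) = h − 2⟨h,s⟩·s` satisfies `Cov(f_switch(X), C) = −Cov(X, C)` and is
optimal among all affine maps with that property: vanilla steering in switching mode
is a special case of LEACE-Switch. -/
theorem vanilla_switching_is_special_case_of_LEACE_switch
    {Ω : Type*} [MeasureSpace Ω] [IsProbabilityMeasure (volume : Measure Ω)]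
    {d : ℕ} (X : Ω → Fin d → ℝ) (C : Ω → ℝ)
    (hXm : Measurable X) (hCm : Measurable C)
    (hX2 : Integrable (fun ω => ∑ i, (X ω i) ^ 2))
    (hmean : ∀ i, (∫ ω, X ω i) = 0)
    (hcov : ∀ i j, (∫ ω, X ω i * X ω j) - (∫ ω, X ω i) * (∫ ω, X ω j)
              = if i = j then 1 else 0)
    (hC01 : ∀ ω, C ω = 0 ∨ C ω = 1)
    (hP1 : 0 < (volume {ω | C ω = 1}).toReal)
    (hP1' : (volume {ω | C ω = 1}).toReal < 1)
    (v : Fin d → ℝ)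
    (hv : v = fun i =>
      (∫ ω in {ω | C ω = 1}, X ω i) / (volume {ω | C ω = 1}).toReal
        - (∫ ω in {ω | C ω = 0}, X ω i) / (volume {ω | C ω = 0}).toReal)
    (hv0 : v ≠ 0)
    (s : Fin d → ℝ) (hs : s = fun i => v i / Real.sqrt (∑ j, (v j) ^ 2))
    (fswitch : (Fin d → ℝ) → Fin d → ℝ)
    (hf : ∀ h, fswitch h = fun i => h i - 2 * (∑ j, h j * s j) * s i) :
    (∀ i, (∫ ω, fswitch (X ω) i * C ω) - (∫ ω, fswitch (X ω) i) * (∫ ω, C ω)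
        = -((∫ ω, X ω i * C ω) - (∫ ω, X ω i) * (∫ ω, C ω)))
    ∧
    (∀ (A : Matrix (Fin d) (Fin d) ℝ) (b : Fin d → ℝ),
      (∀ i, (∫ ω, (A.mulVec (X ω) i + b i) * C ω)
          - (∫ ω, A.mulVec (X ω) i + b i) * (∫ ω, C ω)
          = -((∫ ω, X ω i * C ω) - (∫ ω, X ω i) * (∫ ω, C ω))) →
      (∫ ω, ∑ i, (fswitch (X ω) i - X ω i) ^ 2)
        ≤ ∫ ω, ∑ i, (A.mulVec (X ω) i + b i - X ω i) ^ 2) := by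
  -- measurability and integrability basics
  have hXi : ∀ i, Measurable fun ω => X ω i := fun i => (measurable_pi_apply i).comp hXm
  have hXi2 : ∀ i, Integrable (fun ω => (X ω i)^2) := by
    intro i
    refine hX2.mono ((hXi i).pow_const 2).aestronglyMeasurable
      (Filter.Eventually.of_forall fun ω => ?_)
    rw [Real.norm_eq_abs, Real.norm_eq_abs, abs_of_nonneg (sq_nonneg _),
      abs_of_nonneg (Finset.sum_nonneg fun j _ => sq_nonneg _)]
    exact Finset.single_le_sum (f := fun j => (X ω j)^2) (fun j _ => sq_nonneg _) (Finset.mem_univ i)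
  have hXint : ∀ i, Integrable fun ω => X ω i := by
    intro i
    have h : Integrable (fun ω => ((X ω i)^2 + 1)/2) :=
      ((hXi2 i).add (integrable_const 1)).div_const 2
    refine h.mono (hXi i).aestronglyMeasurable (Filter.Eventually.of_forall fun ω => ?_)
    rw [Real.norm_eq_abs, Real.norm_eq_abs]
    have h1 := abs_nonneg (X ω i)
    have h2 := sq_abs (X ω i)
    have h3 := sq_nonneg (|X ω i| - 1)
    rw [abs_of_nonneg (by nlinarith : (0:ℝ) ≤ ((X ω i)^2 + 1)/2)]
    nlinarith
  have hXij : ∀ i j, Integrable fun ω => X ω i * X ω j := by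
    intro i j
    have h : Integrable (fun ω => ((X ω i)^2 + (X ω j)^2)/2) :=
      ((hXi2 i).add (hXi2 j)).div_const 2
    refine h.mono ((hXi i).mul (hXi j)).aestronglyMeasurable
      (Filter.Eventually.of_forall fun ω => ?_)
    rw [Real.norm_eq_abs, Real.norm_eq_abs, abs_mul]
    have h1 := abs_nonneg (X ω i); have h2 := abs_nonneg (X ω j)
    have h3 := sq_abs (X ω i); have h4 := sq_abs (X ω j)
    have h5 := sq_nonneg (|X ω i| - |X ω j|)
    rw [abs_of_nonneg (by nlinarith : (0:ℝ) ≤ ((X ω i)^2 + (X ω j)^2)/2)]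
    nlinarith
  have hIij : ∀ i j, (∫ ω, X ω i * X ω j) = if i = j then 1 else 0 := by
    intro i j; have h := hcov i j; rwa [hmean i, hmean j, zero_mul, sub_zero] at h
  have hCabs : ∀ ω, |C ω| ≤ 1 := by intro ω; rcases hC01 ω with h|h <;> simp [h]
  have hCint : Integrable C := by
    refine (integrable_const (1:ℝ)).mono hCm.aestronglyMeasurable
      (Filter.Eventually.of_forall fun ω => ?_)
    simpa using hCabs ω
  have hXiC : ∀ i, Integrable fun ω => X ω i * C ω := by
    intro i
    refine (hXint i).mono ((hXi i).mul hCm).aestronglyMeasurable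
      (Filter.Eventually.of_forall fun ω => ?_)
    rw [Real.norm_eq_abs, Real.norm_eq_abs, abs_mul]
    calc |X ω i| * |C ω| ≤ |X ω i| * 1 := by
          exact mul_le_mul_of_nonneg_left (hCabs ω) (abs_nonneg _)
      _ = |X ω i| := mul_one _
  set c : Fin d → ℝ := fun i => ∫ ω, X ω i * C ω with hcdef
  have hci : ∀ i, (∫ ω, X ω i * C ω) = c i := fun i => rfl
  -- the sets {C=1}, {C=0}
  have hs1 : MeasurableSet {ω | C ω = 1} := hCm (measurableSet_singleton 1)
  have hcompl : {ω | C ω = 0} = {ω | C ω = 1}ᶜ := by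
    ext ω; simp only [Set.mem_setOf_eq, Set.mem_compl_iff]
    rcases hC01 ω with h|h <;> simp [h]
  set p := (volume {ω | C ω = 1}).toReal with hp
  have hp0 : (volume {ω | C ω = 0}).toReal = 1 - p := by
    rw [hcompl, measure_compl hs1 (measure_ne_top _ _), measure_univ,
      ENNReal.toReal_sub_of_le prob_le_one ENNReal.one_ne_top]
    simp [hp]
  have hpne : p ≠ 0 := ne_of_gt hP1
  have hpne' : (1:ℝ) - p ≠ 0 := by intro h; apply absurd hP1'; linarith
  -- c i = ∫ over {C=1}
  have hcset : ∀ i, c i = ∫ ω in {ω | C ω = 1}, X ω i := by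
    intro i
    rw [← hci i]
    have h : (fun ω => X ω i * C ω)
        = fun ω => Set.indicator {ω | C ω = 1} (fun ω => X ω i) ω := by
      funext ω
      rcases hC01 ω with h|h
      · rw [Set.indicator_of_notMem (by simp [h]) _]; simp [h]
      · rw [Set.indicator_of_mem (by simp [h] : ω ∈ {ω | C ω = 1}) _]; simp [h]
    rw [h, integral_indicator hs1]
  have hneg : ∀ i, (∫ ω in {ω | C ω = 0}, X ω i) = - c i := by
    intro i
    have h := integral_add_compl hs1 (hXint i)
    rw [hmean i] at h
    rw [hcompl, ← hcset i] at *
    linarith [h]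
  -- c = p(1-p) v
  have hq : ∀ i, c i = (p * (1-p)) * v i := by
    intro i
    rw [hv]
    simp only
    rw [← hcset i, hneg i, hp0]
    field_simp
    ring
  -- norm facts
  set n := ∑ j, (v j)^2 with hn
  have hnpos : 0 < n := by
    have hex : ∃ j, v j ≠ 0 := by
      by_contra h; push_neg at h; exact hv0 (funext h)
    obtain ⟨j, hj⟩ := hex
    exact lt_of_lt_of_le (by positivity)
      (Finset.single_le_sum (fun k _ => sq_nonneg (v k)) (Finset.mem_univ j))
  set r := Real.sqrt n with hr
  have hrpos : 0 < r := Real.sqrt_pos.2 hnpos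
  have hr2 : r^2 = n := Real.sq_sqrt hnpos.le
  have hsj : ∀ j, s j = v j / r := by intro j; rw [hs]
  have hss : ∑ j, (s j)^2 = 1 := by
    have h : ∑ j, (s j)^2 = (∑ j, (v j)^2) / r^2 := by
      rw [Finset.sum_div]
      exact Finset.sum_congr rfl fun j _ => by rw [hsj j]; rw [div_pow]
    rw [h, hr2, ← hn, div_self hnpos.ne']
  have hsv : ∑ j, s j * v j = r := by
    have h : ∑ j, s j * v j = (∑ j, (v j)^2) / r := by
      rw [Finset.sum_div]
      exact Finset.sum_congr rfl fun j _ => by rw [hsj j]; ring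
    rw [h, ← hn, ← hr2]
    field_simp
  -- pointwise form of fswitch
  have hfX : ∀ (ω : Ω) i, fswitch (X ω) i = X ω i - ∑ j, (2*s i*s j) * X ω j := by
    intro ω i
    rw [hf]
    simp only
    congr 1
    rw [Finset.mul_sum, Finset.sum_mul]
    exact Finset.sum_congr rfl fun j _ => by ring
  -- integrals of fswitch
  have int_f : ∀ i, (∫ ω, fswitch (X ω) i) = 0 := by
    intro i
    have h : (fun ω => fswitch (X ω) i) = fun ω => X ω i - ∑ j, (2*s i*s j) * X ω j :=
      funext fun ω => hfX ω i
    rw [h, integral_sub (hXint i) (integrable_finset_sum _ fun j _ => (hXint j).const_mul _),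
      integral_finset_sum _ (fun j _ => (hXint j).const_mul _)]
    simp [integral_const_mul, hmean]
  have int_fC : ∀ i, (∫ ω, fswitch (X ω) i * C ω) = c i - ∑ j, (2*s i*s j) * c j := by
    intro i
    have h : (fun ω => fswitch (X ω) i * C ω)
        = fun ω => X ω i * C ω - ∑ j, (2*s i*s j) * (X ω j * C ω) := by
      funext ω
      rw [hfX ω i, sub_mul, Finset.sum_mul]
      congr 1
      exact Finset.sum_congr rfl fun j _ => by ring
    rw [h, integral_sub (hXiC i) (integrable_finset_sum _ fun j _ => (hXiC j).const_mul _),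
      integral_finset_sum _ (fun j _ => (hXiC j).const_mul _)]
    simp only [integral_const_mul, hci]
  have hscs : ∀ i, ∑ j, (2*s i*s j) * c j = 2 * c i := by
    intro i
    have h1 : ∑ j, (2*s i*s j) * c j = (2*s i) * ((p*(1-p)) * ∑ j, s j * v j) := by
      rw [Finset.mul_sum, Finset.mul_sum]
      exact Finset.sum_congr rfl fun j _ => by rw [hq j]; ring
    rw [h1, hsv, hq i, hsj i]
    field_simp
  constructor
  · -- part (i)
    intro i
    rw [int_fC i, int_f i, hmean i, hci i, hscs i]
    ring
  · -- part (ii)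
    intro A b hA
    have hmul : ∀ (ω : Ω) i, A.mulVec (X ω) i = ∑ j, A i j * X ω j := by
      intro ω i; simp [Matrix.mulVec, dotProduct]
    have hAc : ∀ i, ∑ j, A i j * c j = - c i := by
      intro i
      have h := hA i
      rw [hci i, hmean i, zero_mul, sub_zero] at h
      have e1 : (∫ ω, (A.mulVec (X ω) i + b i) * C ω)
          = (∑ j, A i j * c j) + b i * (∫ ω, C ω) := by
        have hpt : (fun ω => (A.mulVec (X ω) i + b i) * C ω)
            = fun ω => (∑ j, A i j * (X ω j * C ω)) + b i * C ω := by
          funext ω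
          rw [hmul ω i, add_mul, Finset.sum_mul]
          congr 1
          exact Finset.sum_congr rfl fun j _ => by ring
        rw [hpt, integral_add (integrable_finset_sum _ fun j _ => (hXiC j).const_mul _)
            (hCint.const_mul _),
          integral_finset_sum _ (fun j _ => (hXiC j).const_mul _)]
        simp only [integral_const_mul, hci]
      have e2 : (∫ ω, A.mulVec (X ω) i + b i) = b i := by
        have hpt : (fun ω => A.mulVec (X ω) i + b i)
            = fun ω => (∑ j, A i j * X ω j) + b i := by
          funext ω; rw [hmul ω i]
        rw [hpt, integral_add (integrable_finset_sum _ fun j _ => (hXint j).const_mul _)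
            (integrable_const _),
          integral_finset_sum _ (fun j _ => (hXint j).const_mul _)]
        simp [integral_const_mul, hmean]
      rw [e1, e2] at h
      linarith
    have hAv : ∀ i, ∑ j, A i j * v j = - v i := by
      intro i
      have h := hAc i
      have hq' : ∑ j, A i j * c j = (p*(1-p)) * ∑ j, A i j * v j := by
        rw [Finset.mul_sum]
        exact Finset.sum_congr rfl fun j _ => by rw [hq j]; ring
      rw [hq', hq i] at h
      have hne : p*(1-p) ≠ 0 := mul_ne_zero hpne hpne'
      exact mul_left_cancel₀ hne (by rw [h, mul_neg])
    have hMv : ∀ i, ∑ j, (A i j - (if i = j then (1:ℝ) else 0)) * v j = -2 * v i := by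
      intro i
      have h : ∑ j, (A i j - (if i = j then (1:ℝ) else 0)) * v j
          = (∑ j, A i j * v j) - ∑ j, (if i = j then (1:ℝ) else 0) * v j := by
        rw [← Finset.sum_sub_distrib]
        exact Finset.sum_congr rfl fun j _ => by ring
      rw [h, hAv i]
      simp [ite_mul, Finset.sum_ite_eq]
      ring
    have hRHSpt : ∀ (ω : Ω) i, A.mulVec (X ω) i + b i - X ω i
        = ∑ j, (A i j - (if i = j then (1:ℝ) else 0)) * X ω j + b i := by
      intro ω i
      rw [hmul ω i]
      have h : ∑ j, (A i j - (if i = j then (1:ℝ) else 0)) * X ω j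
          = (∑ j, A i j * X ω j) - ∑ j, (if i = j then (1:ℝ) else 0) * X ω j := by
        rw [← Finset.sum_sub_distrib]
        exact Finset.sum_congr rfl fun j _ => by ring
      rw [h]
      simp [ite_mul, Finset.sum_ite_eq]
      ring
    have quad := fun (w : Fin d → ℝ) (t : ℝ) => quad_int_aux X hXij hXint hmean hIij w t
    have hRHS : (∫ ω, ∑ i, (A.mulVec (X ω) i + b i - X ω i)^2)
        = ∑ i, ((∑ j, (A i j - (if i = j then (1:ℝ) else 0))^2) + (b i)^2) := by
      have hpt : (fun ω => ∑ i, (A.mulVec (X ω) i + b i - X ω i)^2)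
          = fun ω => ∑ i, (∑ j, (A i j - (if i = j then (1:ℝ) else 0)) * X ω j + b i)^2 := by
        funext ω
        exact Finset.sum_congr rfl fun i _ => by rw [hRHSpt ω i]
      rw [hpt, integral_finset_sum _ (fun i _ => (quad _ (b i)).1)]
      exact Finset.sum_congr rfl fun i _ => (quad _ (b i)).2
    have hLHSpt : ∀ (ω : Ω) i, fswitch (X ω) i - X ω i
        = ∑ j, (-(2*s i*s j)) * X ω j + 0 := by
      intro ω i
      rw [hfX ω i]
      have h : ∑ j, (-(2*s i*s j)) * X ω j = -(∑ j, (2*s i*s j) * X ω j) := by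
        rw [← Finset.sum_neg_distrib]
        exact Finset.sum_congr rfl fun j _ => by ring
      rw [h]
      ring
    have hLHS : (∫ ω, ∑ i, (fswitch (X ω) i - X ω i)^2)
        = ∑ i, ((∑ j, (-(2*s i*s j))^2) + (0:ℝ)^2) := by
      have hpt : (fun ω => ∑ i, (fswitch (X ω) i - X ω i)^2)
          = fun ω => ∑ i, (∑ j, (-(2*s i*s j)) * X ω j + 0)^2 := by
        funext ω
        exact Finset.sum_congr rfl fun i _ => by rw [hLHSpt ω i]
      rw [hpt, integral_finset_sum _ (fun i _ => (quad _ 0).1)]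
      exact Finset.sum_congr rfl fun i _ => (quad _ 0).2
    rw [hLHS, hRHS]
    have hL4 : ∑ i, ((∑ j, (-(2*s i*s j))^2) + (0:ℝ)^2) = 4 := by
      have h1 : ∀ i, (∑ j, (-(2*s i*s j))^2) + (0:ℝ)^2 = 4 * (s i)^2 := by
        intro i
        have h2 : ∑ j, (-(2*s i*s j))^2 = (4*(s i)^2) * ∑ j, (s j)^2 := by
          rw [Finset.mul_sum]
          exact Finset.sum_congr rfl fun j _ => by ring
        rw [h2, hss]
        ring
      rw [Finset.sum_congr rfl fun i _ => h1 i, ← Finset.mul_sum, hss]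
      norm_num
    rw [hL4]
    have key : ∀ i, 4 * (v i)^2 / n ≤ ∑ j, (A i j - (if i = j then (1:ℝ) else 0))^2 := by
      intro i
      have cs := Finset.sum_mul_sq_le_sq_mul_sq Finset.univ
        (fun j => A i j - (if i = j then (1:ℝ) else 0)) v
      rw [hMv i] at cs
      rw [div_le_iff₀ hnpos]
      rw [← hn] at cs
      nlinarith [cs]
    calc (4:ℝ) = ∑ i, 4 * (v i)^2 / n := by
          rw [← Finset.sum_div, ← Finset.mul_sum, ← hn]
          field_simp
      _ ≤ ∑ i, (∑ j, (A i j - (if i = j then (1:ℝ) else 0))^2) :=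
          Finset.sum_le_sum fun i _ => key i
      _ ≤ ∑ i, ((∑ j, (A i j - (if i = j then (1:ℝ) else 0))^2) + (b i)^2) :=
          Finset.sum_le_sum fun i _ => le_add_of_nonneg_right (sq_nonneg _)
end

section
/- Let S ∈ ℝ^{d×d} be symmetric positive semidefinite, let R ∈ ℝ^{d×d} be symmetric positive semidefinite with R² = S, and let W be the Moore–Penrose pseudoinverse of R. Let Σ ∈ ℝ^{d×k} be a matrix each of whose columns lies in Im(S), and let N be the Moore–Penrose pseudoinverse of W·Σ. Then (I_d − 2·R·(W·Σ)·N·W)·Σ = −Σ. (This is the constraint-satisfaction identity showing the LEACE-Switch matrix Â = I − 2W⁺(WΣ_XZ)(WΣ_XZ)⁺W satisfies Â·Σ_XZ = −Σ_XZ.) -/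
/-!
Since `S = R²`, the columns of `Sig` lie in `Im R`, on which `R W` is the identity
(`R W R = R`), so `R W Sig = Sig`. Together with `(W Sig) N (W Sig) = W Sig` this makes
`R (W Sig) N W` fix `Sig`, and the reflection `1 - 2 R (W Sig) N W` negates it.
-/

open Matrix

namespace Matrix

variable {m n p R : Type*} [Fintype n] [CommSemiring R]

theorem exists_mul_eq_of_forall_exists_mulVec_eq_col {A : Matrix m n R} {B : Matrix m p R}
    (h : ∀ j, ∃ x, A *ᵥ x = fun i => B i j) : ∃ X : Matrix n p R, A * X = B := by
  choose x hx using h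
  exact ⟨of fun i j => x j i, ext fun i j => congrFun (hx j) i⟩

end Matrix

theorem leace_switch_constraint_general {d k : ℕ}
    (S R W : Matrix (Fin d) (Fin d) ℝ)
    (Sig : Matrix (Fin d) (Fin k) ℝ) (N : Matrix (Fin k) (Fin d) ℝ)
    (hRS : R * R = S)
    (hW1 : R * W * R = R)
    (hIm : ∀ j, ∃ x : Fin d → ℝ, S.mulVec x = fun i => Sig i j)
    (hN1 : (W * Sig) * N * (W * Sig) = W * Sig) :
    ((1 : Matrix (Fin d) (Fin d) ℝ) - (2 : ℝ) • (R * (W * Sig) * N * W)) * Sig = -Sig := by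
  obtain ⟨X, hX⟩ := exists_mul_eq_of_forall_exists_mulVec_eq_col hIm
  have hRWSig : R * W * Sig = Sig := by
    rw [← hX, ← hRS, Matrix.mul_assoc R R, ← Matrix.mul_assoc (R * W), hW1]
  have hproj : R * (W * Sig) * N * W * Sig = Sig := by
    calc R * (W * Sig) * N * W * Sig = R * (W * Sig * N * (W * Sig)) := by
          simp only [Matrix.mul_assoc]
      _ = Sig := by rw [hN1, ← Matrix.mul_assoc, hRWSig]
  rw [Matrix.sub_mul, Matrix.one_mul, Matrix.smul_mul, hproj]
  module

/-- Constraint satisfaction for LEACE-Switch: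
`(I − 2·R·(W·Sig)·N·W)·Sig = −Sig`, where `R` is the symmetric PSD square root of the
symmetric PSD matrix `S`, `W = R⁺`, every column of `Sig` lies in `Im(S)`, and
`N = (W·Sig)⁺`. -/
theorem leace_switch_constraint {d k : ℕ}
    (S R W : Matrix (Fin d) (Fin d) ℝ)
    (Sig : Matrix (Fin d) (Fin k) ℝ) (N : Matrix (Fin k) (Fin d) ℝ)
    (hS : S.PosSemidef) (hR : R.PosSemidef) (hRS : R * R = S)
    (hW1 : R * W * R = R) (hW2 : W * R * W = W)
    (hW3 : (R * W)ᵀ = R * W) (hW4 : (W * R)ᵀ = W * R)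
    (hIm : ∀ j, ∃ x : Fin d → ℝ, S.mulVec x = fun i => Sig i j)
    (hN1 : (W * Sig) * N * (W * Sig) = W * Sig) (hN2 : N * (W * Sig) * N = N)
    (hN3 : ((W * Sig) * N)ᵀ = (W * Sig) * N) (hN4 : (N * (W * Sig))ᵀ = N * (W * Sig)) :
    ((1 : Matrix (Fin d) (Fin d) ℝ) - (2 : ℝ) • (R * (W * Sig) * N * W)) * Sig = -Sig :=
  leace_switch_constraint_general S R W Sig N hRS hW1 hIm hN1
end

section
/- Let S ∈ ℝ^{d×d} be symmetric positive semidefinite, let R ∈ ℝ^{d×d} be symmetric positive semidefinite with R² = S, and let W be the Moore–Penrose pseudoinverse of R. Let Σ ∈ ℝ^{d×k} be a matrix each of whose columns lies in Im(S), and let N be the Moore–Penrose pseudoinverse of W·Σ. Then (I_d − R·(W·Σ)·N·W)·Σ = 0. (This is the constraint-satisfaction identity showing the LEACE erasure matrix Â = I − W⁺(WΣ_XZ)(WΣ_XZ)⁺W satisfies Â·Σ_XZ = 0.) -/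
/-! Every column of `Sig` lies in `Im S = Im (R * R) ⊆ Im R`, on which `R * W` acts as the
identity because `R * W * R = R`. Hence `R * (W * Sig) * N * W * Sig = R * (W * Sig) = Sig`,
since `(W * Sig) * N * (W * Sig) = W * Sig`. -/

open Matrix

namespace Matrix

variable {m n p α : Type*} [Fintype n]

theorem exists_mul_eq_of_forall_col_mem_range [NonUnitalNonAssocSemiring α]
    {S : Matrix m n α} {A : Matrix m p α}
    (h : ∀ j, ∃ x : n → α, S *ᵥ x = fun i => A i j) : ∃ X : Matrix n p α, S * X = A := by
  choose x hx using h
  exact ⟨of fun i j => x j i, ext fun i j => congrFun (hx j) i⟩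

theorem mul_mul_mul_cancel_of_mul_mul_eq [Fintype m] [NonUnitalSemiring α]
    {R : Matrix m n α} {W : Matrix n m α} (h : R * W * R = R) (X : Matrix n p α) :
    R * W * (R * X) = R * X := by
  rw [← Matrix.mul_assoc, h]

end Matrix

theorem leace_constraint_general {d k : ℕ}
    (S R W : Matrix (Fin d) (Fin d) ℝ)
    (Sig : Matrix (Fin d) (Fin k) ℝ) (N : Matrix (Fin k) (Fin d) ℝ)
    (hRS : R * R = S)
    (hW1 : R * W * R = R)
    (hIm : ∀ j, ∃ x : Fin d → ℝ, S.mulVec x = fun i => Sig i j)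
    (hN1 : (W * Sig) * N * (W * Sig) = W * Sig) :
    ((1 : Matrix (Fin d) (Fin d) ℝ) - R * (W * Sig) * N * W) * Sig = 0 := by
  have hSig : R * W * Sig = Sig := by
    obtain ⟨X, rfl⟩ := exists_mul_eq_of_forall_col_mem_range hIm
    rw [← hRS, Matrix.mul_assoc R R X]
    exact mul_mul_mul_cancel_of_mul_mul_eq hW1 _
  calc ((1 : Matrix (Fin d) (Fin d) ℝ) - R * (W * Sig) * N * W) * Sig
      = Sig - R * ((W * Sig) * N * (W * Sig)) := by
        simp only [Matrix.sub_mul, Matrix.one_mul, Matrix.mul_assoc]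
    _ = 0 := by rw [hN1, ← Matrix.mul_assoc, hSig, sub_self]

/-- Constraint satisfaction for LEACE:
`(I − R·(W·Sig)·N·W)·Sig = 0`, where `R` is the symmetric PSD square root of the
symmetric PSD matrix `S`, `W = R⁺`, every column of `Sig` lies in `Im(S)`, and
`N = (W·Sig)⁺`. -/
theorem leace_constraint {d k : ℕ}
    (S R W : Matrix (Fin d) (Fin d) ℝ)
    (Sig : Matrix (Fin d) (Fin k) ℝ) (N : Matrix (Fin k) (Fin d) ℝ)
    (hS : S.PosSemidef) (hR : R.PosSemidef) (hRS : R * R = S)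
    (hW1 : R * W * R = R) (hW2 : W * R * W = W)
    (hW3 : (R * W)ᵀ = R * W) (hW4 : (W * R)ᵀ = W * R)
    (hIm : ∀ j, ∃ x : Fin d → ℝ, S.mulVec x = fun i => Sig i j)
    (hN1 : (W * Sig) * N * (W * Sig) = W * Sig) (hN2 : N * (W * Sig) * N = N)
    (hN3 : ((W * Sig) * N)ᵀ = (W * Sig) * N) (hN4 : (N * (W * Sig))ᵀ = N * (W * Sig)) :
    ((1 : Matrix (Fin d) (Fin d) ℝ) - R * (W * Sig) * N * W) * Sig = 0 :=
  leace_constraint_general S R W Sig N hRS hW1 hIm hN1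
end

section
/- Let S ∈ ℝ^{d×d} be symmetric positive semidefinite, let R ∈ ℝ^{d×d} be symmetric positive semidefinite with R² = S, and let W be the Moore–Penrose pseudoinverse of R. Let Σ₁, Σ₂ ∈ ℝ^{d×l} be matrices each of whose columns lies in Im(S), assume Σ₁ has full column rank l, and let N₁ be the Moore–Penrose pseudoinverse of W·Σ₁. Then (I_d + R·(W·Σ₂ − W·Σ₁)·N₁·W)·Σ₁ = Σ₂. (This is the constraint-satisfaction identity showing the MidSteer matrix Â = I + W⁺(Σ_{WX,Z₂} − Σ_{WX,Z₁})Σ_{WX,Z₁}⁺W satisfies Â·Σ_XZ₁ = Σ_XZ₂.) -/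
open Matrix

/-- A matrix with full column rank has injective `mulVec`. -/
lemma aux_mulVec_injective {d l : ℕ} (A : Matrix (Fin d) (Fin l) ℝ) (h : A.rank = l) :
    Function.Injective A.mulVec := by
  have h1 := LinearMap.finrank_range_add_finrank_ker A.mulVecLin
  rw [show Module.finrank ℝ (LinearMap.range A.mulVecLin) = A.rank from rfl, h] at h1
  simp only [Module.finrank_pi, Fintype.card_fin] at h1
  have hker : LinearMap.ker A.mulVecLin = ⊥ := by
    rw [Submodule.finrank_eq_zero.symm]; omega
  have := LinearMap.ker_eq_bot.mp hker
  exact this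

/-- Constraint satisfaction for MidSteer:
`(I + R·(W·Sig₂ − W·Sig₁)·N₁·W)·Sig₁ = Sig₂`, where `R` is the symmetric PSD square root of the
symmetric PSD matrix `S`, `W = R⁺`, every column of `Sig₁, Sig₂` lies in `Im(S)`,
`Sig₁` has full column rank `l`, and `N₁ = (W·Sig₁)⁺`. -/
theorem midsteer_constraint {d l : ℕ}
    (S R W : Matrix (Fin d) (Fin d) ℝ)
    (Sig₁ Sig₂ : Matrix (Fin d) (Fin l) ℝ) (N₁ : Matrix (Fin l) (Fin d) ℝ)
    (hS : S.PosSemidef) (hR : R.PosSemidef) (hRS : R * R = S)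
    (hW1 : R * W * R = R) (hW2 : W * R * W = W)
    (hW3 : (R * W)ᵀ = R * W) (hW4 : (W * R)ᵀ = W * R)
    (hIm1 : ∀ j, ∃ x : Fin d → ℝ, S.mulVec x = fun i => Sig₁ i j)
    (hIm2 : ∀ j, ∃ x : Fin d → ℝ, S.mulVec x = fun i => Sig₂ i j)
    (hrank : Sig₁.rank = l)
    (hN1 : (W * Sig₁) * N₁ * (W * Sig₁) = W * Sig₁) (hN2 : N₁ * (W * Sig₁) * N₁ = N₁)
    (hN3 : ((W * Sig₁) * N₁)ᵀ = (W * Sig₁) * N₁) (hN4 : (N₁ * (W * Sig₁))ᵀ = N₁ * (W * Sig₁)) :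
    ((1 : Matrix (Fin d) (Fin d) ℝ) + R * (W * Sig₂ - W * Sig₁) * N₁ * W) * Sig₁ = Sig₂ := by
  -- Key: R * W acts as identity on matrices whose columns lie in Im(S)
  have key : ∀ (Sig : Matrix (Fin d) (Fin l) ℝ),
      (∀ j, ∃ x : Fin d → ℝ, S.mulVec x = fun i => Sig i j) → R * W * Sig = Sig := by
    intro Sig hIm
    ext i j
    obtain ⟨x, hx⟩ := hIm j
    have hcol : (fun i => Sig i j) = R.mulVec (R.mulVec x) := by
      rw [← hx, ← hRS, ← Matrix.mulVec_mulVec]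
    have h1 : (R * W).mulVec (fun i => Sig i j) = fun i => Sig i j := by
      rw [hcol, Matrix.mulVec_mulVec, Matrix.mulVec_mulVec, hW1, ← Matrix.mulVec_mulVec]
    have h2 : ((R * W) * Sig) i j = ((R * W).mulVec (fun i => Sig i j)) i := by
      simp [Matrix.mul_apply, Matrix.mulVec, dotProduct]
    rw [h2, h1]
  have hRW1 : R * W * Sig₁ = Sig₁ := key Sig₁ hIm1
  have hRW2 : R * W * Sig₂ = Sig₂ := key Sig₂ hIm2
  -- W * Sig₁ has full column rank
  have hrk : (W * Sig₁).rank = l := by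
    have hle : (W * Sig₁).rank ≤ l := by
      have := Matrix.rank_le_width (W * Sig₁)
      exact this
    have hge : l ≤ (W * Sig₁).rank := by
      have h1 : Sig₁ = R * (W * Sig₁) := by rw [← Matrix.mul_assoc, hRW1]
      calc l = Sig₁.rank := hrank.symm
        _ = (R * (W * Sig₁)).rank := by rw [← h1]
        _ ≤ (W * Sig₁).rank := Matrix.rank_mul_le_right R (W * Sig₁)
    omega
  have hinj := aux_mulVec_injective (W * Sig₁) hrk
  -- N₁ * (W * Sig₁) = 1
  have hNI : N₁ * (W * Sig₁) = 1 := by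
    have h1 : (W * Sig₁) * (N₁ * (W * Sig₁)) = W * Sig₁ := by
      rw [← Matrix.mul_assoc, hN1]
    have h3 : ∀ v : Fin l → ℝ, (N₁ * (W * Sig₁)).mulVec v = v := by
      intro v
      apply hinj
      rw [Matrix.mulVec_mulVec, h1]
    ext i j
    have := congrFun (h3 (Pi.single j 1)) i
    simpa [Matrix.mulVec_single, Matrix.one_apply, Pi.single_apply, eq_comm] using this
  calc ((1 : Matrix (Fin d) (Fin d) ℝ) + R * (W * Sig₂ - W * Sig₁) * N₁ * W) * Sig₁
      = Sig₁ + R * ((W * Sig₂ - W * Sig₁) * (N₁ * (W * Sig₁))) := by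
        rw [Matrix.add_mul, Matrix.one_mul]; simp only [Matrix.mul_assoc]
    _ = Sig₁ + R * (W * Sig₂ - W * Sig₁) := by rw [hNI, Matrix.mul_one]
    _ = Sig₁ + (R * (W * Sig₂) - R * (W * Sig₁)) := by rw [Matrix.mul_sub]
    _ = Sig₁ + (Sig₂ - Sig₁) := by
        rw [← Matrix.mul_assoc, ← Matrix.mul_assoc, hRW1, hRW2]
    _ = Sig₂ := by abel
end
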